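/- For every n ≥ 3, the identity matrix I_n admits a valid 2D macro scheme with 6 phrases: the explicit positions (1,1), (1,2), (2,1), the phrase I_n[1][3..n] with source (1,2), the phrase I_n[3..n][1] with source (2,1), and the phrase I_n[2..n][2..n] with source (1,1). Hence b(I_n) ≤ 6. -/
import Mathlib


/-!
Statement 6: For every `n ≥ 3`, the identity matrix `I_n` admits a valid 2D macro
scheme with 6 phrases: the explicit positions `(1,1)`, `(1,2)`, `(2,1)` (1-based),
the phrase `I_n[1][3..n]` with source `(1,2)`, the phrase `I_n[3..n][1]` with
source `(2,1)`, and the phrase `I_n[2..n][2..n]` with source `(1,1)`.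
Hence `b(I_n) ≤ 6`.  (Here positions are 0-based, so the phrases become the
explicit cells `(0,0)`, `(0,1)`, `(1,0)`, the `1 × (n-2)` phrase at `(0,2)` with
source `(0,1)`, the `(n-2) × 1` phrase at `(2,0)` with source `(1,0)`, and the
`(n-1) × (n-1)` phrase at `(1,1)` with source `(0,0)`.)
-/

/-- A phrase of a 2D macro scheme: a rectangle with top-left corner `(r, c)`,
`h` rows and `w` columns, and an optional source top-left corner (`none` means
`explicit` phrase). 0-based indexing. -/
structure Phrase where
  r : ℕ
  c : ℕ
  h : ℕ
  w : ℕ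
  src : Option (ℕ × ℕ)
deriving DecidableEq

/-- Membership of a position in (the rectangle of) a phrase. -/
def Phrase.Mem (ph : Phrase) (p : ℕ × ℕ) : Prop :=
  ph.r ≤ p.1 ∧ p.1 < ph.r + ph.h ∧ ph.c ≤ p.2 ∧ p.2 < ph.c + ph.w

/-- A valid 2D macro scheme for the `m × n` 2D string `M`: a partition of the
positions into rectangular phrases, each either a single explicit cell or a
copied phrase with a matching source starting at a different position; the
induced map `mp` (sending each copied position to the corresponding position
of the source, and explicit positions to `none`) must reach `none` from every
position after finitely many steps. -/
structure MacroScheme (α : Type*) (M : ℕ → ℕ → α) (m n : ℕ) where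
  phrases : Finset Phrase
  mp : ℕ × ℕ → Option (ℕ × ℕ)
  inGrid : ∀ ph ∈ phrases, 1 ≤ ph.h ∧ 1 ≤ ph.w ∧ ph.r + ph.h ≤ m ∧ ph.c + ph.w ≤ n
  cover : ∀ i j, i < m → j < n → ∃ ph ∈ phrases, ph.Mem (i, j)
  disjoint : ∀ ph₁ ∈ phrases, ∀ ph₂ ∈ phrases, ph₁ ≠ ph₂ →
    ∀ p : ℕ × ℕ, ¬(ph₁.Mem p ∧ ph₂.Mem p)
  explicit : ∀ ph ∈ phrases, ph.src = none → ph.h = 1 ∧ ph.w = 1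
  copied : ∀ ph ∈ phrases, ∀ s : ℕ × ℕ, ph.src = some s →
    s ≠ (ph.r, ph.c) ∧ s.1 + ph.h ≤ m ∧ s.2 + ph.w ≤ n ∧
    ∀ a b, a < ph.h → b < ph.w → M (s.1 + a) (s.2 + b) = M (ph.r + a) (ph.c + b)
  mpSpec : ∀ ph ∈ phrases, ∀ a b, a < ph.h → b < ph.w →
    mp (ph.r + a, ph.c + b) = ph.src.map (fun s => (s.1 + a, s.2 + b))
  valid : ∀ i j, i < m → j < n →
    ∃ k : ℕ, (fun o : Option (ℕ × ℕ) => o.bind mp)^[k + 1] (some (i, j)) = none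

/-- `b(M)`: the minimum number of phrases of a valid 2D macro scheme for `M`. -/
noncomputable def bMeasure {α : Type*} (M : ℕ → ℕ → α) (m n : ℕ) : ℕ :=
  sInf {c | ∃ S : MacroScheme α M m n, S.phrases.card = c}

/-- The identity matrix (over `{0,1}`, with `true` as `1`), 0-based. -/
def idMat : ℕ → ℕ → Bool := fun i j => decide (i = j)


def myMp (p : ℕ × ℕ) : Option (ℕ × ℕ) :=
  if (p.1 = 0 ∧ p.2 ≤ 1) ∨ p = (1, 0) then none
  else if p.1 = 0 then some (0, p.2 - 1)
  else if p.2 = 0 then some (p.1 - 1, 0)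
  else some (p.1 - 1, p.2 - 1)

lemma myMp_decr (p : ℕ × ℕ) :
    myMp p = none ∨ ∃ q, myMp p = some q ∧ q.1 + q.2 < p.1 + p.2 := by
  obtain ⟨i, j⟩ := p
  unfold myMp
  simp only [Prod.mk.injEq]
  split_ifs with h1 h2 h3
  · exact Or.inl rfl
  · exact Or.inr ⟨_, rfl, by simp at h1 ⊢; omega⟩
  · exact Or.inr ⟨_, rfl, by simp at h1 ⊢; omega⟩
  · exact Or.inr ⟨_, rfl, by simp at h1 ⊢; omega⟩

lemma myMp_term (p : ℕ × ℕ) :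
    ∃ k, (fun o : Option (ℕ × ℕ) => o.bind myMp)^[k + 1] (some p) = none := by
  induction' hs : p.1 + p.2 using Nat.strong_induction_on with s ih generalizing p
  subst hs
  rcases myMp_decr p with h | ⟨q, hq, hlt⟩
  · exact ⟨0, by simp [Function.iterate_succ_apply, h]⟩
  · obtain ⟨k, hk⟩ := ih (q.1 + q.2) hlt q rfl
    refine ⟨k + 1, ?_⟩
    rw [Function.iterate_succ_apply]
    simpa [hq] using hk

theorem statement6 (n : ℕ) (hn : 3 ≤ n) :
    (∃ S : MacroScheme Bool idMat n n,
      S.phrases = {⟨0, 0, 1, 1, none⟩, ⟨0, 1, 1, 1, none⟩, ⟨1, 0, 1, 1, none⟩,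
        ⟨0, 2, 1, n - 2, some (0, 1)⟩, ⟨2, 0, n - 2, 1, some (1, 0)⟩,
        ⟨1, 1, n - 1, n - 1, some (0, 0)⟩}) ∧
    bMeasure idMat n n ≤ 6 := by
  have hS : ∃ S : MacroScheme Bool idMat n n,
      S.phrases = {⟨0, 0, 1, 1, none⟩, ⟨0, 1, 1, 1, none⟩, ⟨1, 0, 1, 1, none⟩,
        ⟨0, 2, 1, n - 2, some (0, 1)⟩, ⟨2, 0, n - 2, 1, some (1, 0)⟩,
        ⟨1, 1, n - 1, n - 1, some (0, 0)⟩} := by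
    refine ⟨⟨{⟨0, 0, 1, 1, none⟩, ⟨0, 1, 1, 1, none⟩, ⟨1, 0, 1, 1, none⟩,
        ⟨0, 2, 1, n - 2, some (0, 1)⟩, ⟨2, 0, n - 2, 1, some (1, 0)⟩,
        ⟨1, 1, n - 1, n - 1, some (0, 0)⟩}, myMp, ?_, ?_, ?_, ?_, ?_, ?_, ?_⟩, rfl⟩
    · -- inGrid
      intro ph hph
      simp only [Finset.mem_insert, Finset.mem_singleton] at hph
      rcases hph with rfl | rfl | rfl | rfl | rfl | rfl <;> simp <;> omega
    · -- cover
      intro i j hi hj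
      rcases Nat.lt_or_ge i 1 with h1 | h1
      · rcases Nat.lt_or_ge j 1 with h2 | h2
        · exact ⟨⟨0, 0, 1, 1, none⟩, by simp, by simp [Phrase.Mem]; omega⟩
        · rcases Nat.lt_or_ge j 2 with h3 | h3
          · exact ⟨⟨0, 1, 1, 1, none⟩, by simp, by simp [Phrase.Mem]; omega⟩
          · exact ⟨⟨0, 2, 1, n - 2, some (0, 1)⟩, by simp, by simp [Phrase.Mem]; omega⟩
      · rcases Nat.lt_or_ge j 1 with h2 | h2
        · rcases Nat.lt_or_ge i 2 with h3 | h3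
          · exact ⟨⟨1, 0, 1, 1, none⟩, by simp, by simp [Phrase.Mem]; omega⟩
          · exact ⟨⟨2, 0, n - 2, 1, some (1, 0)⟩, by simp, by simp [Phrase.Mem]; omega⟩
        · exact ⟨⟨1, 1, n - 1, n - 1, some (0, 0)⟩, by simp, by simp [Phrase.Mem]; omega⟩
    · -- disjoint
      intro ph₁ h₁ ph₂ h₂ hne p hmem
      obtain ⟨m1, m2⟩ := hmem
      simp only [Finset.mem_insert, Finset.mem_singleton] at h₁ h₂
      rcases h₁ with rfl | rfl | rfl | rfl | rfl | rfl <;>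
        rcases h₂ with rfl | rfl | rfl | rfl | rfl | rfl <;>
        first
          | exact hne rfl
          | (simp [Phrase.Mem] at m1 m2; omega)
    · -- explicit
      intro ph hph hsrc
      simp only [Finset.mem_insert, Finset.mem_singleton] at hph
      rcases hph with rfl | rfl | rfl | rfl | rfl | rfl <;> simp_all
    · -- copied
      intro ph hph s hs
      simp only [Finset.mem_insert, Finset.mem_singleton] at hph
      rcases hph with rfl | rfl | rfl | rfl | rfl | rfl
      · exact absurd hs (by simp)
      · exact absurd hs (by simp)
      · exact absurd hs (by simp)
      · obtain rfl : s = (0, 1) := by simpa using hs.symm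
        refine ⟨by simp, by simp <;> omega, by simp <;> omega, ?_⟩
        intro a b ha hb
        simp only at ha hb
        simp only [idMat, decide_eq_decide]
        omega
      · obtain rfl : s = (1, 0) := by simpa using hs.symm
        refine ⟨by simp, by simp <;> omega, by simp <;> omega, ?_⟩
        intro a b ha hb
        simp only at ha hb
        simp only [idMat, decide_eq_decide]
        omega
      · obtain rfl : s = (0, 0) := by simpa using hs.symm
        refine ⟨by simp, by simp <;> omega, by simp <;> omega, ?_⟩
        intro a b ha hb
        simp only [idMat, decide_eq_decide]
        omega
    · -- mpSpec
      intro ph hph a b ha hb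
      simp only [Finset.mem_insert, Finset.mem_singleton] at hph
      rcases hph with rfl | rfl | rfl | rfl | rfl | rfl <;>
        simp only [] at ha hb ⊢
      · have : a = 0 := by omega
        have hb0 : b = 0 := by omega
        subst this; subst hb0; simp [myMp]
      · have : a = 0 := by omega
        have hb0 : b = 0 := by omega
        subst this; subst hb0; simp [myMp]
      · have : a = 0 := by omega
        have hb0 : b = 0 := by omega
        subst this; subst hb0; simp [myMp]
      · have : a = 0 := by omega
        subst this
        simp only [myMp]
        norm_num
        intro h
        exact absurd h (by omega)
      · have : b = 0 := by omega
        subst this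
        simp only [myMp]
        norm_num
        intro h
        exact absurd h (by omega)
      · simp [myMp]
    · -- valid
      intro i j _ _
      exact myMp_term (i, j)
  obtain ⟨S, hSp⟩ := hS
  refine ⟨⟨S, hSp⟩, ?_⟩
  have h1 : bMeasure idMat n n ≤ S.phrases.card := Nat.sInf_le ⟨S, rfl⟩
  have h2 : S.phrases.card ≤ 6 := by
    rw [hSp]
    refine le_trans (Finset.card_insert_le _ _) ?_
    refine Nat.succ_le_succ (le_trans (Finset.card_insert_le _ _) ?_)
    refine Nat.succ_le_succ (le_trans (Finset.card_insert_le _ _) ?_)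
    refine Nat.succ_le_succ (le_trans (Finset.card_insert_le _ _) ?_)
    refine Nat.succ_le_succ (le_trans (Finset.card_insert_le _ _) ?_)
    simp
  omega
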